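/- arXiv:0704.1401 — 2 statements merged into one kernel-verified Lean document; each statement's English description precedes it below -/
import Mathlib

section
/- For the same 4-dimensional algebra, the symmetric bilinear form with matrix [[0,0,0,e],[0,0,-e,0],[0,-e,f,g],[e,0,g,h]] satisfies (x, y∘z) = -(y, x∘z) for all x,y,z, and the bosonic identity (x∘y)∘z = (x∘z)∘y holds. -/
/-
Products of the algebra lie in span(e1, e2), which the multiplication annihilates from the left,
so every product of three elements vanishes and the bosonic identity is trivial. Against a product
y∘z the form only sees the entries ±e pairing span(e1, e2) with span(e3, e4), which gives
(x, y∘z) = e z₃ (x₄ y₃ - x₃ y₄), antisymmetric in x and y (coordinates numbered as e1, …, e4,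
whereas `Fin 4` counts from 0).
-/

def mul4 (x y : Fin 4 → ℝ) : Fin 4 → ℝ :=
  ![x 2 * y 2, x 3 * y 2, 0, 0]

noncomputable def gform (e f g h : ℝ) (x y : Fin 4 → ℝ) : ℝ :=
  dotProduct x ((!![0, 0, 0, e; 0, 0, -e, 0; 0, -e, f, g; e, 0, g, h]).mulVec y)

theorem mul4_mul4 (x y z : Fin 4 → ℝ) : mul4 (mul4 x y) z = 0 := by
  funext i
  fin_cases i <;> simp [mul4]

theorem gform_mul4 (e f g h : ℝ) (x y z : Fin 4 → ℝ) :
    gform e f g h x (mul4 y z) = e * z 2 * (x 3 * y 2 - x 2 * y 3) := by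
  simp only [gform, mul4, dotProduct, Matrix.mulVec, Fin.sum_univ_four, Fin.isValue,
    Matrix.of_apply, Matrix.cons_val', Matrix.cons_val_zero, Matrix.cons_val_fin_one,
    Matrix.cons_val_one, Matrix.cons_val]
  ring

/-- bosonic identity holds and (x, y∘z) = -(y, x∘z). -/
theorem stmt6 (e f g h : ℝ) :
    (∀ x y z : Fin 4 → ℝ, mul4 (mul4 x y) z = mul4 (mul4 x z) y) ∧
    (∀ x y z : Fin 4 → ℝ,
      gform e f g h x (mul4 y z) = - gform e f g h y (mul4 x z)) := by
  refine ⟨fun x y z => by rw [mul4_mul4, mul4_mul4], fun x y z => ?_⟩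
  rw [gform_mul4, gform_mul4]
  ring
end

section
/- With the same setup (cotangent-bundle construction with B the lift of A satisfying A^s_{,j} A^i_{,sk} = A^s_{,k} A^i_{,sj}), define ω_1^{ij} = ω_2^{ir}∂_r B^j - ω_2^{jr}∂_r B^i. Then the torsion-free relation ω_1^{ir}Γ^{jk}_r = ω_1^{jr}Γ^{ik}_r (summed over r) holds for all i,j,k. -/
noncomputable def pd {ι : Type*} [Fintype ι] [DecidableEq ι]
    (f : (ι → ℝ) → ℝ) (r : ι) (u : ι → ℝ) : ℝ :=
  fderiv ℝ f u (Pi.single r 1)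

noncomputable def pd2 {ι : Type*} [Fintype ι] [DecidableEq ι]
    (f : (ι → ℝ) → ℝ) (r k : ι) (u : ι → ℝ) : ℝ :=
  pd (fun v => pd f k v) r u

def wCan (n : ℕ) : Matrix (Fin n ⊕ Fin n) (Fin n ⊕ Fin n) ℝ :=
  Matrix.of fun i j =>
    match i, j with
    | .inl a, .inr b => if a = b then (1 : ℝ) else 0
    | .inr a, .inl b => if a = b then (-1 : ℝ) else 0
    | _, _ => 0

def hLift {n : ℕ} (A : (Fin n → ℝ) → Fin n → ℝ)
    (u : Fin n ⊕ Fin n → ℝ) : Fin n ⊕ Fin n → ℝ :=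
  fun i => match i with
    | .inl a => A (fun s => u (.inl s)) a
    | .inr _ => 0

noncomputable def GamLift {n : ℕ} (A : (Fin n → ℝ) → Fin n → ℝ)
    (i j k : Fin n ⊕ Fin n) (u : Fin n ⊕ Fin n → ℝ) : ℝ :=
  ∑ r, wCan n i r * pd2 (fun v => hLift A v j) r k u

noncomputable def w1Lift {n : ℕ} (A : (Fin n → ℝ) → Fin n → ℝ)
    (i j : Fin n ⊕ Fin n) (u : Fin n ⊕ Fin n → ℝ) : ℝ :=
  ∑ r, (wCan n i r * pd (fun v => hLift A v j) r u
      - wCan n j r * pd (fun v => hLift A v i) r u)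

open ContinuousLinearMap in
noncomputable def Lmap (n : ℕ) : ((Fin n ⊕ Fin n) → ℝ) →L[ℝ] (Fin n → ℝ) :=
  ContinuousLinearMap.pi (fun s : Fin n => ContinuousLinearMap.proj (Sum.inl s))

lemma Lmap_apply {n : ℕ} (v : Fin n ⊕ Fin n → ℝ) (s : Fin n) :
    Lmap n v s = v (Sum.inl s) := rfl

lemma Lmap_single_inl {n : ℕ} (s : Fin n) :
    Lmap n (Pi.single (Sum.inl s) 1) = Pi.single s 1 := by
  funext t
  simp [Lmap_apply, Pi.single_apply]

lemma Lmap_single_inr {n : ℕ} (s : Fin n) :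
    Lmap n (Pi.single (Sum.inr s) 1) = 0 := by
  funext t
  simp [Lmap_apply, Pi.single_apply]

lemma pd_zero {ι : Type*} [Fintype ι] [DecidableEq ι] (r : ι) (u : ι → ℝ) :
    pd (fun _ => (0:ℝ)) r u = 0 := by
  simp [pd]

lemma pd_comp {n : ℕ} (f : (Fin n → ℝ) → ℝ) (r : Fin n ⊕ Fin n)
    (u : Fin n ⊕ Fin n → ℝ) (hf : DifferentiableAt ℝ f (Lmap n u)) :
    pd (fun v => f (Lmap n v)) r u
      = fderiv ℝ f (Lmap n u) (Lmap n (Pi.single r 1)) := by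
  have h : HasFDerivAt (fun v => f (Lmap n v))
      ((fderiv ℝ f (Lmap n u)).comp (Lmap n)) u :=
    (hf.hasFDerivAt).comp u ((Lmap n).hasFDerivAt)
  simp [pd, h.fderiv]

lemma pd_comp_inl {n : ℕ} (f : (Fin n → ℝ) → ℝ) (s : Fin n)
    (u : Fin n ⊕ Fin n → ℝ) (hf : DifferentiableAt ℝ f (Lmap n u)) :
    pd (fun v => f (Lmap n v)) (Sum.inl s) u = pd f s (Lmap n u) := by
  rw [pd_comp f _ u hf, Lmap_single_inl]; rfl

lemma pd_comp_inr {n : ℕ} (f : (Fin n → ℝ) → ℝ) (s : Fin n)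
    (u : Fin n ⊕ Fin n → ℝ) (hf : DifferentiableAt ℝ f (Lmap n u)) :
    pd (fun v => f (Lmap n v)) (Sum.inr s) u = 0 := by
  rw [pd_comp f _ u hf, Lmap_single_inr, map_zero]

lemma contDiff_pd {n : ℕ} (f : (Fin n → ℝ) → ℝ) (hf : ContDiff ℝ (⊤ : ℕ∞) f) (c : Fin n) :
    ContDiff ℝ (⊤ : ℕ∞) (fun v => pd f c v) := by
  have h1 : ContDiff ℝ (⊤ : ℕ∞) (fderiv ℝ f) := hf.fderiv_right (by simp)
  have := (ContinuousLinearMap.apply ℝ ℝ (Pi.single c (1:ℝ))).contDiff.comp h1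
  exact this

lemma pd2_symm {n : ℕ} (f : (Fin n → ℝ) → ℝ) (hf : ContDiff ℝ (⊤ : ℕ∞) f)
    (r k : Fin n) (u : Fin n → ℝ) : pd2 f r k u = pd2 f k r u := by
  have hd : Differentiable ℝ f := hf.differentiable (by simp)
  have hd' : Differentiable ℝ (fderiv ℝ f) :=
    (hf.fderiv_right (m := (⊤ : ℕ∞)) (by simp)).differentiable (by simp)
  have hsymm := second_derivative_symmetric (f := f) (f' := fderiv ℝ f)
      (f'' := fderiv ℝ (fderiv ℝ f) u) (x := u)
      (fun y => (hd y).hasFDerivAt) ((hd' u).hasFDerivAt)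
  have key : ∀ a b : Fin n, pd2 f a b u
      = fderiv ℝ (fderiv ℝ f) u (Pi.single a 1) (Pi.single b 1) := by
    intro a b
    have h2' := ((ContinuousLinearMap.apply ℝ ℝ (Pi.single b (1:ℝ))).hasFDerivAt).comp u
        (hd' u).hasFDerivAt
    have h2 : HasFDerivAt (fun v => (fderiv ℝ f v) (Pi.single b (1:ℝ)))
        ((ContinuousLinearMap.apply ℝ ℝ (Pi.single b (1:ℝ))).comp
          (fderiv ℝ (fderiv ℝ f) u)) u := h2' 
    simp [pd2, pd, h2.fderiv]
  rw [key, key, hsymm]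

section main
variable {n : ℕ} (A : (Fin n → ℝ) → Fin n → ℝ)

lemma hLift_inl (a : Fin n) :
    (fun v => hLift A v (Sum.inl a)) = (fun v => A (Lmap n v) a) := rfl

-- smoothness of components
lemma gA_smooth (hA : ContDiff ℝ (⊤ : ℕ∞) A) (a : Fin n) : ContDiff ℝ (⊤ : ℕ∞) (fun w => A w a) :=
  (contDiff_pi.mp hA a)

-- first derivatives of the lift
lemma pdh_inr_tgt (b : Fin n) (r : Fin n ⊕ Fin n) (u : Fin n ⊕ Fin n → ℝ) :
    pd (fun v => hLift A v (Sum.inr b)) r u = 0 :=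
  pd_zero r u

lemma pdh_inl_inl (hA : ContDiff ℝ (⊤ : ℕ∞) A) (a s : Fin n) (u : Fin n ⊕ Fin n → ℝ) :
    pd (fun v => hLift A v (Sum.inl a)) (Sum.inl s) u
      = pd (fun w => A w a) s (Lmap n u) := by
  rw [hLift_inl]
  exact pd_comp_inl _ s u (((gA_smooth A hA a).differentiable (by simp)) _)

lemma pdh_inl_inr (hA : ContDiff ℝ (⊤ : ℕ∞) A) (a s : Fin n) (u : Fin n ⊕ Fin n → ℝ) :
    pd (fun v => hLift A v (Sum.inl a)) (Sum.inr s) u = 0 := by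
  rw [hLift_inl]
  exact pd_comp_inr _ s u (((gA_smooth A hA a).differentiable (by simp)) _)

-- second derivatives of the lift
lemma pd2h_inr_tgt (b : Fin n) (r k : Fin n ⊕ Fin n) (u : Fin n ⊕ Fin n → ℝ) :
    pd2 (fun v => hLift A v (Sum.inr b)) r k u = 0 := by
  unfold pd2
  have : (fun v => pd (fun w => hLift A w (Sum.inr b)) k v) = fun _ => (0:ℝ) := by
    funext v; exact pdh_inr_tgt A b k v
  rw [this]; exact pd_zero r u

lemma pd2h_k_inr (hA : ContDiff ℝ (⊤ : ℕ∞) A) (a : Fin n) (r : Fin n ⊕ Fin n) (c : Fin n)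
    (u : Fin n ⊕ Fin n → ℝ) :
    pd2 (fun v => hLift A v (Sum.inl a)) r (Sum.inr c) u = 0 := by
  unfold pd2
  have : (fun v => pd (fun w => hLift A w (Sum.inl a)) (Sum.inr c) v)
      = fun _ => (0:ℝ) := by
    funext v; exact pdh_inl_inr A hA a c v
  rw [this]; exact pd_zero r u

lemma pd2h_inner_eq (hA : ContDiff ℝ (⊤ : ℕ∞) A) (a c : Fin n) :
    (fun v => pd (fun w => hLift A w (Sum.inl a)) (Sum.inl c) v)
      = (fun v => pd (fun w => A w a) c (Lmap n v)) := by
  funext v; exact pdh_inl_inl A hA a c v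

lemma pd2h_inl_inl (hA : ContDiff ℝ (⊤ : ℕ∞) A) (a s c : Fin n) (u : Fin n ⊕ Fin n → ℝ) :
    pd2 (fun v => hLift A v (Sum.inl a)) (Sum.inl s) (Sum.inl c) u
      = pd2 (fun w => A w a) s c (Lmap n u) := by
  unfold pd2
  rw [pd2h_inner_eq A hA a c]
  exact pd_comp_inl _ s u
    (((contDiff_pd _ (gA_smooth A hA a) c).differentiable (by simp)) _)

lemma pd2h_inr_inl (hA : ContDiff ℝ (⊤ : ℕ∞) A) (a s c : Fin n) (u : Fin n ⊕ Fin n → ℝ) :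
    pd2 (fun v => hLift A v (Sum.inl a)) (Sum.inr s) (Sum.inl c) u = 0 := by
  unfold pd2
  rw [pd2h_inner_eq A hA a c]
  exact pd_comp_inr _ s u
    (((contDiff_pd _ (gA_smooth A hA a) c).differentiable (by simp)) _)

-- wCan values
lemma wCan_ll (a b : Fin n) : wCan n (Sum.inl a) (Sum.inl b) = 0 := rfl
lemma wCan_rr (a b : Fin n) : wCan n (Sum.inr a) (Sum.inr b) = 0 := rfl
lemma wCan_lr (a b : Fin n) :
    wCan n (Sum.inl a) (Sum.inr b) = if a = b then 1 else 0 := rfl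
lemma wCan_rl (a b : Fin n) :
    wCan n (Sum.inr a) (Sum.inl b) = if a = b then -1 else 0 := rfl

-- GamLift values
lemma Gam_inl (hA : ContDiff ℝ (⊤ : ℕ∞) A) (b : Fin n) (j k : Fin n ⊕ Fin n) (u : Fin n ⊕ Fin n → ℝ) :
    GamLift A (Sum.inl b) j k u = 0 := by
  unfold GamLift
  rw [Fintype.sum_sum_type]
  have h1 : ∀ c : Fin n, wCan n (Sum.inl b) (Sum.inl c)
      * pd2 (fun v => hLift A v j) (Sum.inl c) k u = 0 := by
    intro c; rw [wCan_ll]; ring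
  have h2 : ∀ c : Fin n, wCan n (Sum.inl b) (Sum.inr c)
      * pd2 (fun v => hLift A v j) (Sum.inr c) k u = 0 := by
    intro c
    rcases j with a | a
    · rcases k with m | m
      · rw [pd2h_inr_inl A hA]; ring
      · rw [pd2h_k_inr A hA]; ring
    · rw [pd2h_inr_tgt]; ring
  simp only [h1, h2, Finset.sum_const_zero, add_zero]

lemma Gam_inr_inr (s : Fin n) (b : Fin n) (k : Fin n ⊕ Fin n)
    (u : Fin n ⊕ Fin n → ℝ) :
    GamLift A (Sum.inr s) (Sum.inr b) k u = 0 := by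
  unfold GamLift
  have : ∀ r : Fin n ⊕ Fin n, wCan n (Sum.inr s) r
      * pd2 (fun v => hLift A v (Sum.inr b)) r k u = 0 := by
    intro r; rw [pd2h_inr_tgt]; ring
  simp only [this, Finset.sum_const_zero]

lemma Gam_k_inr (hA : ContDiff ℝ (⊤ : ℕ∞) A) (s : Fin n) (j : Fin n ⊕ Fin n) (c : Fin n)
    (u : Fin n ⊕ Fin n → ℝ) :
    GamLift A j (Sum.inl s) (Sum.inr c) u = 0 := by
  unfold GamLift
  have : ∀ r : Fin n ⊕ Fin n, wCan n j r
      * pd2 (fun v => hLift A v (Sum.inl s)) r (Sum.inr c) u = 0 := by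
    intro r; rw [pd2h_k_inr A hA]; ring
  simp only [this, Finset.sum_const_zero]

lemma Gam_main (hA : ContDiff ℝ (⊤ : ℕ∞) A) (s a c : Fin n) (u : Fin n ⊕ Fin n → ℝ) :
    GamLift A (Sum.inr s) (Sum.inl a) (Sum.inl c) u
      = - pd2 (fun w => A w a) s c (Lmap n u) := by
  unfold GamLift
  rw [Fintype.sum_sum_type]
  have h2 : ∀ m : Fin n, wCan n (Sum.inr s) (Sum.inr m)
      * pd2 (fun v => hLift A v (Sum.inl a)) (Sum.inr m) (Sum.inl c) u = 0 := by
    intro m; rw [wCan_rr]; ring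
  simp only [h2, Finset.sum_const_zero, add_zero, wCan_rl]
  rw [Finset.sum_eq_single s]
  · rw [if_pos rfl, pd2h_inl_inl A hA]; ring
  · intro m _ hm
    rw [if_neg (by exact fun h => hm h.symm)]; ring
  · intro h; exact absurd (Finset.mem_univ s) h

-- w1Lift values
lemma w1_ll (hA : ContDiff ℝ (⊤ : ℕ∞) A) (a b : Fin n) (u : Fin n ⊕ Fin n → ℝ) :
    w1Lift A (Sum.inl a) (Sum.inl b) u = 0 := by
  unfold w1Lift
  rw [Fintype.sum_sum_type]
  have h1 : ∀ c : Fin n,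
      (wCan n (Sum.inl a) (Sum.inl c) * pd (fun v => hLift A v (Sum.inl b)) (Sum.inl c) u
        - wCan n (Sum.inl b) (Sum.inl c) * pd (fun v => hLift A v (Sum.inl a)) (Sum.inl c) u) = 0 := by
    intro c; rw [wCan_ll, wCan_ll]; ring
  have h2 : ∀ c : Fin n,
      (wCan n (Sum.inl a) (Sum.inr c) * pd (fun v => hLift A v (Sum.inl b)) (Sum.inr c) u
        - wCan n (Sum.inl b) (Sum.inr c) * pd (fun v => hLift A v (Sum.inl a)) (Sum.inr c) u) = 0 := by
    intro c; rw [pdh_inl_inr A hA, pdh_inl_inr A hA]; ring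
  simp only [h1, h2, Finset.sum_const_zero, add_zero]

lemma w1_rr (s t : Fin n) (u : Fin n ⊕ Fin n → ℝ) :
    w1Lift A (Sum.inr s) (Sum.inr t) u = 0 := by
  unfold w1Lift
  have : ∀ r : Fin n ⊕ Fin n,
      (wCan n (Sum.inr s) r * pd (fun v => hLift A v (Sum.inr t)) r u
        - wCan n (Sum.inr t) r * pd (fun v => hLift A v (Sum.inr s)) r u) = 0 := by
    intro r; rw [pdh_inr_tgt, pdh_inr_tgt]; ring
  simp only [this, Finset.sum_const_zero]

lemma w1_rl (hA : ContDiff ℝ (⊤ : ℕ∞) A) (s a : Fin n) (u : Fin n ⊕ Fin n → ℝ) :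
    w1Lift A (Sum.inr s) (Sum.inl a) u
      = - pd (fun w => A w a) s (Lmap n u) := by
  unfold w1Lift
  rw [Fintype.sum_sum_type]
  have h2 : ∀ c : Fin n,
      (wCan n (Sum.inr s) (Sum.inr c) * pd (fun v => hLift A v (Sum.inl a)) (Sum.inr c) u
        - wCan n (Sum.inl a) (Sum.inr c) * pd (fun v => hLift A v (Sum.inr s)) (Sum.inr c) u) = 0 := by
    intro c; rw [wCan_rr, pdh_inr_tgt]; ring
  simp only [h2, Finset.sum_const_zero, add_zero, wCan_rl, wCan_ll]
  rw [Finset.sum_eq_single s]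
  · rw [if_pos rfl, pdh_inl_inl A hA]; ring
  · intro m _ hm
    rw [if_neg (by exact fun h => hm h.symm), pdh_inl_inl A hA]; ring
  · intro h; exact absurd (Finset.mem_univ s) h

end main

/-- vanishing Nijenhuis torsion of ∇A implies the
torsion-free relation ω_1^{ir}Γ^{jk}_r = ω_1^{jr}Γ^{ik}_r. -/
theorem stmt19 {n : ℕ} (A : (Fin n → ℝ) → Fin n → ℝ)
    (hA : ContDiff ℝ (⊤ : ℕ∞) A)
    (hN : ∀ q : Fin n → ℝ, ∀ i j k : Fin n,
      (∑ s, pd (fun w => A w s) j q * pd2 (fun w => A w i) s k q)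
        = ∑ s, pd (fun w => A w s) k q * pd2 (fun w => A w i) s j q) :
    ∀ u : Fin n ⊕ Fin n → ℝ, ∀ i j k : Fin n ⊕ Fin n,
      (∑ r, w1Lift A i r u * GamLift A j k r u)
        = ∑ r, w1Lift A j r u * GamLift A i k r u := by
  intro u i j k
  have hGinr : ∀ (j k : Fin n ⊕ Fin n) (c : Fin n),
      GamLift A j k (Sum.inr c) u = 0 := by
    intro j k c
    rcases k with m | m
    · exact Gam_k_inr A hA m j c u
    · rcases j with b | b
      · exact Gam_inl A hA b _ _ u
      · exact Gam_inr_inr A b m _ u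
  have hGL : ∀ (b : Fin n) (k r : Fin n ⊕ Fin n),
      (∑ r, w1Lift A k r u * GamLift A (Sum.inl b) r r u) = 0 := by
    intro b k r
    exact Finset.sum_eq_zero fun r _ => by rw [Gam_inl A hA]; ring
  rcases i with a | t <;> rcases j with b | s
  · -- inl, inl
    rw [Finset.sum_eq_zero fun r _ => by rw [Gam_inl A hA]; ring,
        Finset.sum_eq_zero fun r _ => by rw [Gam_inl A hA]; ring]
  · -- i = inl a, j = inr s
    have h1 : (∑ r, w1Lift A (Sum.inl a) r u * GamLift A (Sum.inr s) k r u) = 0 := by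
      rw [Fintype.sum_sum_type]
      have e1 : ∀ c : Fin n, w1Lift A (Sum.inl a) (Sum.inl c) u
          * GamLift A (Sum.inr s) k (Sum.inl c) u = 0 := fun c => by
        rw [w1_ll A hA]; ring
      have e2 : ∀ c : Fin n, w1Lift A (Sum.inl a) (Sum.inr c) u
          * GamLift A (Sum.inr s) k (Sum.inr c) u = 0 := fun c => by
        rw [hGinr]; ring
      simp only [e1, e2, Finset.sum_const_zero, add_zero]
    rw [h1, Finset.sum_eq_zero fun r _ => by rw [Gam_inl A hA]; ring]
  · -- i = inr t, j = inl b
    have h1 : (∑ r, w1Lift A (Sum.inr t) r u * GamLift A (Sum.inl b) k r u) = 0 :=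
      Finset.sum_eq_zero fun r _ => by rw [Gam_inl A hA]; ring
    have h2 : (∑ r, w1Lift A (Sum.inl b) r u * GamLift A (Sum.inr t) k r u) = 0 := by
      rw [Fintype.sum_sum_type]
      have e1 : ∀ c : Fin n, w1Lift A (Sum.inl b) (Sum.inl c) u
          * GamLift A (Sum.inr t) k (Sum.inl c) u = 0 := fun c => by
        rw [w1_ll A hA]; ring
      have e2 : ∀ c : Fin n, w1Lift A (Sum.inl b) (Sum.inr c) u
          * GamLift A (Sum.inr t) k (Sum.inr c) u = 0 := fun c => by
        rw [hGinr]; ring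
      simp only [e1, e2, Finset.sum_const_zero, add_zero]
    rw [h1, h2]
  · -- i = inr t, j = inr s
    rcases k with a | b
    · rw [Fintype.sum_sum_type, Fintype.sum_sum_type]
      have e2 : ∀ c : Fin n, w1Lift A (Sum.inr t) (Sum.inr c) u
          * GamLift A (Sum.inr s) (Sum.inl a) (Sum.inr c) u = 0 := fun c => by
        rw [hGinr]; ring
      have e2' : ∀ c : Fin n, w1Lift A (Sum.inr s) (Sum.inr c) u
          * GamLift A (Sum.inr t) (Sum.inl a) (Sum.inr c) u = 0 := fun c => by
        rw [hGinr]; ring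
      simp only [e2, e2', Finset.sum_const_zero, add_zero]
      have e1 : ∀ c : Fin n, w1Lift A (Sum.inr t) (Sum.inl c) u
          * GamLift A (Sum.inr s) (Sum.inl a) (Sum.inl c) u
          = pd (fun w => A w c) t (Lmap n u) * pd2 (fun w => A w a) c s (Lmap n u) := by
        intro c
        rw [w1_rl A hA, Gam_main A hA,
          pd2_symm (fun w => A w a) (gA_smooth A hA a) s c]
        ring
      have e1' : ∀ c : Fin n, w1Lift A (Sum.inr s) (Sum.inl c) u
          * GamLift A (Sum.inr t) (Sum.inl a) (Sum.inl c) u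
          = pd (fun w => A w c) s (Lmap n u) * pd2 (fun w => A w a) c t (Lmap n u) := by
        intro c
        rw [w1_rl A hA, Gam_main A hA,
          pd2_symm (fun w => A w a) (gA_smooth A hA a) t c]
        ring
      simp only [e1, e1']
      exact hN (Lmap n u) a t s
    · rw [Finset.sum_eq_zero fun r _ => by rw [Gam_inr_inr A]; ring,
          Finset.sum_eq_zero fun r _ => by rw [Gam_inr_inr A]; ring]
end
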